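/- arXiv:1802.07712 — 3 statements merged into one kernel-verified Lean document; each statement's English description precedes it below -/
import Mathlib

section
/- Let A be an m×n matrix and B an m×q matrix with entries in T = ℝ ∪ {−∞} such that every column of A has at least one finite entry, every row of A has at least one finite entry, and every row of B has at least one finite entry, and let P be a q×n row-stochastic matrix; let F : ℝⁿ → ℝⁿ be the associated Shapley operator and F* the dual Shapley operator, extended to a self-map of Tᵐ. Then the condition number of 𝒫_ℝ(F) coincides with that of 𝒫(F*); precisely: if there exists x ∈ ℝⁿ with x_i < F(x)_i for all i, then inf{‖u‖_∞ : u ∈ ℝⁿ, 𝒫_ℝ(u + F) is infeasible} = inf{‖w‖_∞ : w ∈ ℝᵐ, 𝒫(w + F*) is feasible}; otherwise, inf{‖u‖_∞ : u ∈ ℝⁿ, 𝒫_ℝ(u + F) is feasible} = inf{‖w‖_∞ : w ∈ ℝᵐ, 𝒫(w + F*) is infeasible} (infima in [0, +∞], inf ∅ := +∞). -/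
open scoped ENNReal

noncomputable section

variable {m n q : ℕ}

/-- The real value of a finite element of `T = ℝ ∪ {-∞}` (junk value `0` at `-∞`). -/
def sval (a : WithBot ℝ) : ℝ := WithBot.unbotD 0 a

/-- The Shapley operator `F : ℝⁿ → ℝⁿ` associated with `A, B, P`. -/
def shapley (A : Fin m → Fin n → WithBot ℝ) (B : Fin m → Fin q → WithBot ℝ)
    (P : Fin q → Fin n → ℝ) (x : Fin n → ℝ) : Fin n → ℝ := fun j =>
  sInf {r : ℝ | ∃ i, A i j ≠ ⊥ ∧
    r = - sval (A i j) +
      sSup {s : ℝ | ∃ k, B i k ≠ ⊥ ∧ s = sval (B i k) + ∑ l, P k l * x l}}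

/-- `z_l(y) = max_{i' : A_{i'l} ≠ -∞} (A_{i'l} + y_{i'}) ∈ T`, with `(-∞) + a = -∞`.
(Terms with `A_{i'l} = -∞` contribute `-∞ = ⊥` and do not affect the supremum.) -/
def zvec (A : Fin m → Fin n → WithBot ℝ) (y : Fin m → WithBot ℝ) (l : Fin n) : WithBot ℝ :=
  Finset.univ.sup fun i' => A i' l + y i'

open Classical in
/-- `s_k(y) = Σ_l P_{kl} · z_l(y)`, with the convention that `s_k(y) = -∞` as soon as
`z_l(y) = -∞` for some `l` with `P_{kl} > 0`. -/
def svec (A : Fin m → Fin n → WithBot ℝ) (P : Fin q → Fin n → ℝ)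
    (y : Fin m → WithBot ℝ) (k : Fin q) : WithBot ℝ :=
  if ∃ l, 0 < P k l ∧ zvec A y l = ⊥ then ⊥
  else ((∑ l, P k l * sval (zvec A y l) : ℝ) : WithBot ℝ)

open Classical in
/-- The dual Shapley operator `F* : Tᵐ → Tᵐ`,
`F*(y)_i = min_{k : B_{ik} ≠ -∞} ( -B_{ik} + s_k(y) )`, with `-B_{ik} + (-∞) = -∞`. -/
def dualShapleyT (A : Fin m → Fin n → WithBot ℝ) (B : Fin m → Fin q → WithBot ℝ)
    (P : Fin q → Fin n → ℝ) (y : Fin m → WithBot ℝ) : Fin m → WithBot ℝ := fun i =>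
  if h : (Finset.univ.filter fun k => B i k ≠ ⊥).Nonempty then
    (Finset.univ.filter fun k => B i k ≠ ⊥).inf' h fun k =>
      if svec A P y k = ⊥ then ⊥
      else ((- sval (B i k) + sval (svec A P y k) : ℝ) : WithBot ℝ)
  else ⊥

/-- The additive perturbation `u + G` of a self-map `G` of `ℝ^d`. -/
def pertR {d : ℕ} (u : Fin d → ℝ) (G : (Fin d → ℝ) → (Fin d → ℝ)) :
    (Fin d → ℝ) → (Fin d → ℝ) := fun x i => u i + G x i

/-- The additive perturbation `w + G` of a self-map `G` of `T^d`. -/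
def pertT {d : ℕ} (w : Fin d → ℝ) (G : (Fin d → WithBot ℝ) → (Fin d → WithBot ℝ)) :
    (Fin d → WithBot ℝ) → (Fin d → WithBot ℝ) := fun y i => (w i : WithBot ℝ) + G y i

/-- Feasibility of `𝒫_ℝ(G)` for a self-map `G` of `ℝ^d`. -/
def FeasR {d : ℕ} (G : (Fin d → ℝ) → (Fin d → ℝ)) : Prop :=
  ∃ x : Fin d → ℝ, ∀ i, x i < G x i

/-- Feasibility of `𝒫(G)` for a self-map `G` of `T^d`. -/
def FeasT {d : ℕ} (G : (Fin d → WithBot ℝ) → (Fin d → WithBot ℝ)) : Prop :=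
  ∃ y : Fin d → WithBot ℝ, y ≠ (fun _ => ⊥) ∧ y ≤ G y

/-!
Weak duality: a solution `x` of `x < F x` and a nonzero solution `y` of `y ≤ F* y` cannot
coexist, because `t = max_{y_i ≠ -∞} (y_i + g_i(x))` would be strictly smaller than itself,
`g_i(x) = max_k (B_ik + (P x)_k)` being the inner maximum of `F`.

Strong duality, by discounting: if `x < F x` has no solution, then for `α < 1` the fixed point
`x` of the `α`-contraction `F_α = shapley A B (α • P)` has a coordinate `≤ 0`, and
`Y = -g^α(x)` solves the discounted dual `Y_i + B_ik ≤ α Σ_l P_kl z_l(Y)` exactly. Normalising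
`max Y = 0` and letting `α → 1` along a subsequence that converges in `[-∞, 0]^m` yields a
nonzero solution of `y ≤ F* y`.

Finally `w + F*` is the dual operator of the game with `B_ik` replaced by `B_ik - w_i`, whose
Shapley operator lies between `F - ‖w‖` and `F + ‖w‖`; perturbations by constant vectors then
match the two infima.
-/

open Filter Topology

section FiniteExtremum

variable {ι α : Type*} [Finite ι] {p : ι → Prop}

lemma finite_setOf_exists_eq (f : ι → α) : {s | ∃ i, p i ∧ s = f i}.Finite :=
  (Set.finite_range f).subset fun _ ⟨i, _, hs⟩ => ⟨i, hs.symm⟩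

variable [ConditionallyCompleteLinearOrder α]

lemma le_csSup_setOf_exists_eq (f : ι → α) {i : ι} (hi : p i) :
    f i ≤ sSup {s | ∃ i, p i ∧ s = f i} :=
  le_csSup (finite_setOf_exists_eq f).bddAbove ⟨i, hi, rfl⟩

lemma csInf_setOf_exists_eq_le (f : ι → α) {i : ι} (hi : p i) :
    sInf {s | ∃ i, p i ∧ s = f i} ≤ f i :=
  csInf_le (finite_setOf_exists_eq f).bddBelow ⟨i, hi, rfl⟩

lemma exists_csSup_setOf_exists_eq (f : ι → α) (h : ∃ i, p i) :
    ∃ i, p i ∧ sSup {s | ∃ i, p i ∧ s = f i} = f i :=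
  (h.elim fun i hi => ⟨f i, i, hi, rfl⟩ : {s | ∃ i, p i ∧ s = f i}.Nonempty).csSup_mem
    (finite_setOf_exists_eq f)

lemma exists_csInf_setOf_exists_eq (f : ι → α) (h : ∃ i, p i) :
    ∃ i, p i ∧ sInf {s | ∃ i, p i ∧ s = f i} = f i :=
  (h.elim fun i hi => ⟨f i, i, hi, rfl⟩ : {s | ∃ i, p i ∧ s = f i}.Nonempty).csInf_mem
    (finite_setOf_exists_eq f)

end FiniteExtremum

lemma sum_mul_add_const {ι : Type*} [Fintype ι] {p : ι → ℝ} (hp : ∑ l, p l = 1)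
    (y : ι → ℝ) (c : ℝ) : ∑ l, p l * (y l + c) = ∑ l, p l * y l + c := by
  simp only [mul_add, Finset.sum_add_distrib, ← Finset.sum_mul, hp, one_mul]

lemma sum_mul_le_sum_mul_add {ι : Type*} [Fintype ι] {p : ι → ℝ} (hp0 : ∀ l, 0 ≤ p l)
    (hp : ∑ l, p l = 1) {x y : ι → ℝ} {c : ℝ} (h : ∀ l, x l ≤ y l + c) :
    ∑ l, p l * x l ≤ ∑ l, p l * y l + c :=
  (Finset.sum_le_sum fun l _ => mul_le_mul_of_nonneg_left (h l) (hp0 l)).trans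
    (sum_mul_add_const hp y c).le

lemma sum_smul_mul (α : ℝ) (P : Fin q → Fin n → ℝ) (k : Fin q) (x : Fin n → ℝ) :
    ∑ l, (α • P) k l * x l = α * ∑ l, P k l * x l := by
  simp [Finset.mul_sum, mul_assoc]

lemma sval_coe (x : ℝ) : sval (x : WithBot ℝ) = x := rfl

lemma coe_sval {a : WithBot ℝ} (ha : a ≠ ⊥) : (sval a : WithBot ℝ) = a := by
  lift a to ℝ using ha; rfl

lemma sval_add {a b : WithBot ℝ} (ha : a ≠ ⊥) (hb : b ≠ ⊥) : sval (a + b) = sval a + sval b := by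
  lift a to ℝ using ha; lift b to ℝ using hb; rfl

lemma lt_coe_sval_add (a : WithBot ℝ) {ε : ℝ} (hε : 0 < ε) :
    a < ((sval a + ε : ℝ) : WithBot ℝ) := by
  induction a using WithBot.recBotCoe with
  | bot => exact WithBot.bot_lt_coe _
  | coe a => exact WithBot.coe_lt_coe.2 (lt_add_of_pos_right a hε)

lemma lt_coe_sub_of_coe_add_lt {a r : ℝ} {b : WithBot ℝ} (h : (a : WithBot ℝ) + b < r) :
    b < ((r - a : ℝ) : WithBot ℝ) := by
  induction b using WithBot.recBotCoe with
  | bot => exact WithBot.bot_lt_coe _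
  | coe b =>
    rw [← WithBot.coe_add, WithBot.coe_lt_coe] at h
    exact WithBot.coe_lt_coe.2 (by linarith)

/-- Coordinatewise convergence in `T = ℝ ∪ {-∞}` for its order topology. -/
def TendstoT (U : ℕ → Fin m → ℝ) (y : Fin m → WithBot ℝ) : Prop :=
  ∀ i, (∀ c : ℝ, y i = c → Tendsto (fun N => U N i) atTop (𝓝 c)) ∧
    ∀ r : ℝ, y i < r → ∀ᶠ N in atTop, U N i < r

lemma exists_subseq_tendstoT (U : ℕ → Fin m → ℝ) (hU : ∀ N i, U N i ≤ 0) :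
    ∃ φ : ℕ → ℕ, StrictMono φ ∧ ∃ y, TendstoT (fun N => U (φ N)) y := by
  -- `exp` identifies `[-∞, 0]` with the compact interval `[0, 1]`
  obtain ⟨v, -, φ, hφ, hv⟩ := (isCompact_Icc (a := (0 : Fin m → ℝ)) (b := 1)).tendsto_subseq
    (x := fun N i => Real.exp (U N i))
    fun N => ⟨fun i => (Real.exp_pos _).le, fun i => Real.exp_le_one_iff.2 (hU N i)⟩
  have hvi : ∀ i, Tendsto (fun N => Real.exp (U (φ N) i)) atTop (𝓝 (v i)) :=
    fun i => tendsto_pi_nhds.1 hv i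
  have hlog : ∀ i, v i ≠ 0 → Tendsto (fun N => U (φ N) i) atTop (𝓝 (Real.log (v i))) :=
    fun i hi => by simpa [Function.comp_def] using (Real.continuousAt_log hi).tendsto.comp (hvi i)
  refine ⟨φ, hφ, fun i => if v i = 0 then ⊥ else (Real.log (v i) : WithBot ℝ),
    fun i => ⟨fun c hc => ?_, fun r hr => ?_⟩⟩
  · dsimp only at hc ⊢
    split_ifs at hc with h0
    · exact absurd hc WithBot.bot_ne_coe
    · rw [← WithBot.coe_inj.1 hc]; exact hlog i h0
  · dsimp only at hr ⊢
    split_ifs at hr with h0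
    · filter_upwards [(hvi i).eventually_lt_const (h0 ▸ Real.exp_pos r)] with N hN
      exact Real.exp_lt_exp.1 hN
    · exact (hlog i h0).eventually_lt_const (WithBot.coe_lt_coe.1 hr)

lemma FeasR.mono {d : ℕ} {G G' : (Fin d → ℝ) → Fin d → ℝ} (h : ∀ x i, G x i ≤ G' x i)
    (hG : FeasR G) : FeasR G' :=
  let ⟨x, hx⟩ := hG; ⟨x, fun i => (hx i).trans_le (h x i)⟩

lemma pertR_le_pertR_norm {d : ℕ} (u : Fin d → ℝ) (G : (Fin d → ℝ) → Fin d → ℝ)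
    (x : Fin d → ℝ) (i : Fin d) : pertR u G x i ≤ pertR (fun _ => ‖u‖) G x i :=
  add_le_add_left ((le_abs_self _).trans (norm_le_pi_norm u i)) _

lemma pertR_neg_norm_le_pertR {d : ℕ} (u : Fin d → ℝ) (G : (Fin d → ℝ) → Fin d → ℝ)
    (x : Fin d → ℝ) (i : Fin d) : pertR (fun _ => -‖u‖) G x i ≤ pertR u G x i :=
  add_le_add_left (neg_le.1 ((neg_le_abs _).trans (norm_le_pi_norm u i))) _

lemma coe_nnnorm_const_le {d : ℕ} {E : Type*} [SeminormedAddGroup E] {c : ℝ} {u : E}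
    (h : |c| ≤ ‖u‖) : ((‖fun _ : Fin d => c‖₊ : NNReal) : ℝ≥0∞) ≤ ‖u‖₊ :=
  ENNReal.coe_le_coe.2 ((pi_nnnorm_const_le c).trans (by rw [← NNReal.coe_le_coe]; simpa using h))

lemma sInf_image_eq_sInf_image {α β γ : Type*} [CompleteLattice γ] {f : α → γ} {g : β → γ}
    {s : Set α} {t : Set β} (h₁ : ∀ a ∈ s, ∃ b ∈ t, g b ≤ f a)
    (h₂ : ∀ b ∈ t, ∃ a ∈ s, f a ≤ g b) : sInf (f '' s) = sInf (g '' t) := by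
  simp only [sInf_image]
  exact le_antisymm (le_iInf₂ fun b hb => let ⟨a, ha, h⟩ := h₂ b hb; iInf₂_le_of_le a ha h)
    (le_iInf₂ fun a ha => let ⟨b, hb, h⟩ := h₁ a ha; iInf₂_le_of_le b hb h)

section ShapleyGame

variable {A : Fin m → Fin n → WithBot ℝ} {B B' : Fin m → Fin q → WithBot ℝ}
  {P P' : Fin q → Fin n → ℝ}

def maxValue (B : Fin m → Fin q → WithBot ℝ) (P : Fin q → Fin n → ℝ) (x : Fin n → ℝ)
    (i : Fin m) : ℝ :=
  sSup {s : ℝ | ∃ k, B i k ≠ ⊥ ∧ s = sval (B i k) + ∑ l, P k l * x l}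

def colMax (A : Fin m → Fin n → WithBot ℝ) (U : Fin m → ℝ) (l : Fin n) : ℝ :=
  sSup {s : ℝ | ∃ i, A i l ≠ ⊥ ∧ s = sval (A i l) + U i}

lemma le_maxValue (x : Fin n → ℝ) {i : Fin m} {k : Fin q} (hk : B i k ≠ ⊥) :
    sval (B i k) + ∑ l, P k l * x l ≤ maxValue B P x i :=
  le_csSup_setOf_exists_eq (fun k => sval (B i k) + ∑ l, P k l * x l) hk

lemma exists_maxValue_eq (x : Fin n → ℝ) {i : Fin m} (hi : ∃ k, B i k ≠ ⊥) :
    ∃ k, B i k ≠ ⊥ ∧ maxValue B P x i = sval (B i k) + ∑ l, P k l * x l :=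
  exists_csSup_setOf_exists_eq (fun k => sval (B i k) + ∑ l, P k l * x l) hi

lemma shapley_le (x : Fin n → ℝ) {i : Fin m} {j : Fin n} (hij : A i j ≠ ⊥) :
    shapley A B P x j ≤ -sval (A i j) + maxValue B P x i :=
  csInf_setOf_exists_eq_le (fun i => -sval (A i j) + maxValue B P x i) hij

lemma exists_shapley_eq (x : Fin n → ℝ) {j : Fin n} (hj : ∃ i, A i j ≠ ⊥) :
    ∃ i, A i j ≠ ⊥ ∧ shapley A B P x j = -sval (A i j) + maxValue B P x i :=
  exists_csInf_setOf_exists_eq (fun i => -sval (A i j) + maxValue B P x i) hj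

lemma le_colMax (U : Fin m → ℝ) {i : Fin m} {l : Fin n} (hil : A i l ≠ ⊥) :
    sval (A i l) + U i ≤ colMax A U l :=
  le_csSup_setOf_exists_eq (fun i => sval (A i l) + U i) hil

lemma exists_colMax_eq (U : Fin m → ℝ) {l : Fin n} (hl : ∃ i, A i l ≠ ⊥) :
    ∃ i, A i l ≠ ⊥ ∧ colMax A U l = sval (A i l) + U i :=
  exists_csSup_setOf_exists_eq (fun i => sval (A i l) + U i) hl

lemma colMax_add_const (hl : ∃ i, A i l ≠ ⊥) (U : Fin m → ℝ) (c : ℝ) :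
    colMax A (fun i => U i + c) l = colMax A U l + c := by
  obtain ⟨i, hi, hU⟩ := exists_colMax_eq U hl
  obtain ⟨i', hi', hUc⟩ := exists_colMax_eq (fun i => U i + c) hl
  have h₁ := le_colMax U hi'
  have h₂ := le_colMax (fun i => U i + c) hi
  linarith

lemma colMax_neg_maxValue (hl : ∃ i, A i l ≠ ⊥) (x : Fin n → ℝ) :
    colMax A (fun i => -maxValue B P x i) l = -shapley A B P x l := by
  obtain ⟨i, hi, hF⟩ := exists_shapley_eq (B := B) (P := P) x hl
  obtain ⟨i', hi', hcol⟩ := exists_colMax_eq (fun i => -maxValue B P x i) hl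
  have h₁ := le_colMax (fun i => -maxValue B P x i) hi
  have h₂ := shapley_le (B := B) (P := P) x hi'
  linarith

lemma maxValue_le_add {x x' : Fin n → ℝ} {c : ℝ} {i : Fin m} (hi : ∃ k, B' i k ≠ ⊥)
    (h : ∀ k, B' i k ≠ ⊥ →
      B i k ≠ ⊥ ∧ sval (B' i k) + ∑ l, P' k l * x' l ≤ sval (B i k) + ∑ l, P k l * x l + c) :
    maxValue B' P' x' i ≤ maxValue B P x i + c := by
  obtain ⟨k, hk, hmax⟩ := exists_maxValue_eq (P := P') x' hi
  obtain ⟨hBk, hle⟩ := h k hk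
  linarith [le_maxValue (P := P) x hBk]

lemma shapley_le_add {x x' : Fin n → ℝ} {c : ℝ} {j : Fin n} (hj : ∃ i, A i j ≠ ⊥)
    (hB' : ∀ i, ∃ k, B' i k ≠ ⊥)
    (h : ∀ i k, B' i k ≠ ⊥ →
      B i k ≠ ⊥ ∧ sval (B' i k) + ∑ l, P' k l * x' l ≤ sval (B i k) + ∑ l, P k l * x l + c) :
    shapley A B' P' x' j ≤ shapley A B P x j + c := by
  obtain ⟨i, hi, hF⟩ := exists_shapley_eq (B := B) (P := P) x hj
  linarith [shapley_le (B := B') (P := P') x' hi, maxValue_le_add (hB' i) (h i)]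

lemma exists_zvec_eq {y : Fin m → WithBot ℝ} {l : Fin n} (h : zvec A y l ≠ ⊥) :
    ∃ i, A i l ≠ ⊥ ∧ y i ≠ ⊥ ∧ zvec A y l = A i l + y i := by
  have : Nonempty (Fin m) := by
    by_contra hm
    exact h (by simp [zvec, Finset.univ_eq_empty_iff.2 (not_nonempty_iff.1 hm)])
  obtain ⟨i, -, hi⟩ := Finset.exists_mem_eq_sup _ Finset.univ_nonempty fun i => A i l + y i
  rw [zvec, hi] at h ⊢
  exact ⟨i, (WithBot.add_ne_bot.1 h).1, (WithBot.add_ne_bot.1 h).2, rfl⟩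

lemma coe_le_dualShapleyT_iff {y : Fin m → WithBot ℝ} {i : Fin m} (hi : ∃ k, B i k ≠ ⊥)
    {c : ℝ} : (c : WithBot ℝ) ≤ dualShapleyT A B P y i ↔
      ∀ k, B i k ≠ ⊥ → ((c + sval (B i k) : ℝ) : WithBot ℝ) ≤ svec A P y k := by
  classical
  have hne : (Finset.univ.filter fun k => B i k ≠ ⊥).Nonempty :=
    let ⟨k, hk⟩ := hi; ⟨k, by simpa using hk⟩
  simp only [dualShapleyT, dif_pos hne, Finset.le_inf'_iff, Finset.mem_filter,
    Finset.mem_univ, true_and]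
  refine forall₂_congr fun k _ => ?_
  induction svec A P y k using WithBot.recBotCoe with
  | bot => simp
  | coe s =>
    simp only [WithBot.coe_ne_bot, if_false, sval_coe, WithBot.coe_le_coe]
    constructor <;> intro h <;> linarith

theorem not_feasR_shapley_of_feasT_dualShapleyT (hBrow : ∀ i, ∃ k, B i k ≠ ⊥)
    (hPnn : ∀ k l, 0 ≤ P k l) (hPsum : ∀ k, ∑ l, P k l = 1)
    (hy : FeasT (dualShapleyT A B P)) : ¬ FeasR (shapley A B P) := by
  rintro ⟨x, hx⟩
  obtain ⟨y, hy0, hyF⟩ := hy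
  obtain ⟨i₀, hi₀⟩ : ∃ i, y i ≠ ⊥ := by
    by_contra! h; exact hy0 (funext h)
  -- At a maximiser `i` of `t` and `k` of `g_i(x)`, the dual inequality bounds `t` by a convex
  -- combination of the finite `z_l(y) + x_l`, each of which is `< t` by primal feasibility.
  set t := sSup {s | ∃ i, y i ≠ ⊥ ∧ s = sval (y i) + maxValue B P x i}
  obtain ⟨i, hyi, ht⟩ := exists_csSup_setOf_exists_eq (p := fun i => y i ≠ ⊥)
    (fun i => sval (y i) + maxValue B P x i) ⟨i₀, hi₀⟩
  obtain ⟨k, hBk, hg⟩ := exists_maxValue_eq (P := P) x (hBrow i)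
  have hs := (coe_le_dualShapleyT_iff (hBrow i)).1 (coe_sval hyi ▸ hyF i) k hBk
  unfold svec at hs
  split_ifs at hs with hbot
  · exact absurd hs (by simp)
  push Not at hbot
  rw [WithBot.coe_le_coe] at hs
  have hz : ∀ l, 0 < P k l → sval (zvec A y l) + x l < t := by
    intro l hl
    obtain ⟨i', hA, hy', hz⟩ := exists_zvec_eq (hbot l hl)
    rw [hz, sval_add hA hy']
    linarith [hx l, shapley_le (B := B) (P := P) x hA,
      le_csSup_setOf_exists_eq (p := fun i => y i ≠ ⊥) (fun i => sval (y i) + maxValue B P x i) hy']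
  obtain ⟨l₀, -, hl₀⟩ := Finset.exists_lt_of_sum_lt (s := Finset.univ) (f := fun _ => (0 : ℝ))
    (g := P k) (by simp [hPsum k])
  have hlt : ∑ l, P k l * (sval (zvec A y l) + x l) < ∑ l, P k l * t := by
    refine Finset.sum_lt_sum (fun l _ => ?_) ⟨l₀, Finset.mem_univ _, ?_⟩
    · rcases (hPnn k l).eq_or_lt with h0 | hpos
      · simp [← h0]
      · exact (mul_lt_mul_of_pos_left (hz l hpos) hpos).le
    · exact mul_lt_mul_of_pos_left (hz l₀ hl₀) hl₀
  rw [← Finset.sum_mul, hPsum k, one_mul] at hlt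
  simp only [mul_add, Finset.sum_add_distrib] at hlt
  linarith

lemma contractingWith_shapley_smul (hAcol : ∀ j, ∃ i, A i j ≠ ⊥) (hBrow : ∀ i, ∃ k, B i k ≠ ⊥)
    (hPnn : ∀ k l, 0 ≤ P k l) (hPsum : ∀ k, ∑ l, P k l = 1) {α : ℝ} (hα0 : 0 ≤ α)
    (hα1 : α < 1) : ContractingWith ⟨α, hα0⟩ (shapley A B (α • P)) := by
  have key : ∀ (x y : Fin n → ℝ) j,
      shapley A B (α • P) x j ≤ shapley A B (α • P) y j + α * dist x y := fun x y j =>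
    shapley_le_add (hAcol j) hBrow fun i k hk => ⟨hk, by
      rw [sum_smul_mul, sum_smul_mul, add_assoc, ← mul_add]
      gcongr
      exact sum_mul_le_sum_mul_add (hPnn k) (hPsum k) fun l =>
        sub_le_iff_le_add'.1 ((le_abs_self _).trans (dist_le_pi_dist x y l))⟩
  refine ⟨NNReal.coe_lt_coe.1 hα1, LipschitzWith.of_dist_le_mul fun x y =>
    (dist_pi_le_iff (by positivity)).2 fun j => ?_⟩
  show dist _ _ ≤ α * dist x y
  rw [Real.dist_eq, abs_sub_le_iff]
  exact ⟨by linarith [key x y j], by rw [dist_comm x y]; linarith [key y x j]⟩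

lemma feasR_shapley_of_shapley_smul_eq [Nonempty (Fin n)] (hAcol : ∀ j, ∃ i, A i j ≠ ⊥)
    (hBrow : ∀ i, ∃ k, B i k ≠ ⊥) (hPnn : ∀ k l, 0 ≤ P k l) (hPsum : ∀ k, ∑ l, P k l = 1)
    {α : ℝ} (hα1 : α < 1) {x : Fin n → ℝ} (hx : shapley A B (α • P) x = x)
    (hpos : ∀ l, 0 < x l) : FeasR (shapley A B P) := by
  obtain ⟨l₀, hl₀⟩ := Finite.exists_min x
  have hPx : ∀ k, x l₀ ≤ ∑ l, P k l * x l := fun k => by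
    simpa using sum_mul_le_sum_mul_add (hPnn k) (hPsum k) (x := fun _ => 0) (y := x)
      (c := -x l₀) fun l => by linarith [hl₀ l]
  refine ⟨x, fun j => ?_⟩
  have := shapley_le_add (B' := B) (P' := α • P) (x' := x) (B := B) (P := P) (x := x)
    (c := -((1 - α) * x l₀)) (hAcol j) hBrow
    fun i k hk => ⟨hk, by rw [sum_smul_mul]; nlinarith [hPx k]⟩
  nlinarith [congrFun hx j, hpos l₀]

lemma exists_discounted_dual_solution [Nonempty (Fin n)] (hAcol : ∀ j, ∃ i, A i j ≠ ⊥)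
    (hBrow : ∀ i, ∃ k, B i k ≠ ⊥) (hPnn : ∀ k l, 0 ≤ P k l) (hPsum : ∀ k, ∑ l, P k l = 1)
    (hF : ¬ FeasR (shapley A B P)) {α : ℝ} (hα0 : 0 ≤ α) (hα1 : α < 1) :
    ∃ Y : Fin m → ℝ, (∀ i k, B i k ≠ ⊥ → Y i + sval (B i k) ≤ α * ∑ l, P k l * colMax A Y l) ∧
      ∃ l, 0 ≤ colMax A Y l := by
  have hc := contractingWith_shapley_smul hAcol hBrow hPnn hPsum hα0 hα1
  set x := ContractingWith.fixedPoint _ hc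
  have hx : shapley A B (α • P) x = x := hc.fixedPoint_isFixedPt
  have hcol : ∀ l, colMax A (fun i => -maxValue B (α • P) x i) l = -x l := fun l => by
    rw [colMax_neg_maxValue (hAcol l), hx]
  obtain ⟨l₀, hl₀⟩ : ∃ l, x l ≤ 0 := by
    by_contra! h
    exact hF (feasR_shapley_of_shapley_smul_eq hAcol hBrow hPnn hPsum hα1 hx h)
  refine ⟨fun i => -maxValue B (α • P) x i, fun i k hk => ?_, l₀, by rw [hcol]; linarith⟩
  have := le_maxValue (P := α • P) x hk
  simp only [hcol, sum_smul_mul, mul_neg, Finset.sum_neg_distrib] at this ⊢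
  linarith

lemma exists_normalized_discounted_dual_solution [Nonempty (Fin m)] [Nonempty (Fin n)]
    (hAcol : ∀ j, ∃ i, A i j ≠ ⊥) (hBrow : ∀ i, ∃ k, B i k ≠ ⊥) (hPnn : ∀ k l, 0 ≤ P k l)
    (hPsum : ∀ k, ∑ l, P k l = 1) (hF : ¬ FeasR (shapley A B P)) {C : ℝ}
    (hC : ∀ i l, sval (A i l) ≤ C) {α : ℝ} (hα0 : 0 ≤ α) (hα1 : α < 1) :
    ∃ U : Fin m → ℝ, (∀ i, U i ≤ 0) ∧ (∃ i, U i = 0) ∧ ∀ i k, B i k ≠ ⊥ →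
      U i + sval (B i k) ≤ α * ∑ l, P k l * colMax A U l + (1 - α) * C := by
  obtain ⟨Y, hY, l₀, hl₀⟩ := exists_discounted_dual_solution hAcol hBrow hPnn hPsum hF hα0 hα1
  obtain ⟨i₀, hi₀⟩ := Finite.exists_max Y
  have ht : -C ≤ Y i₀ := by
    obtain ⟨i, -, h⟩ := exists_colMax_eq Y (hAcol l₀)
    linarith [hC i l₀, hi₀ i]
  refine ⟨fun i => Y i + -Y i₀, fun i => by linarith [hi₀ i], ⟨i₀, add_neg_cancel _⟩,
    fun i k hk => ?_⟩
  simp only [colMax_add_const (hAcol _), sum_mul_add_const (hPsum k)]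
  nlinarith [hY i k hk, mul_le_mul_of_nonneg_left ht (sub_nonneg.2 hα1.le)]

lemma TendstoT.eventually_colMax_lt {U : ℕ → Fin m → ℝ} {y : Fin m → WithBot ℝ}
    (hUy : TendstoT U y) {l : Fin n} (hl : ∃ i, A i l ≠ ⊥) {r : ℝ} (h : zvec A y l < r) :
    ∀ᶠ N in atTop, colMax A (U N) l < r := by
  rw [zvec, Finset.sup_lt_iff (WithBot.bot_lt_coe r)] at h
  have hev : ∀ᶠ N in atTop, ∀ i, A i l ≠ ⊥ → sval (A i l) + U N i < r := by
    refine eventually_all.2 fun i => ?_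
    by_cases hA : A i l = ⊥
    · exact .of_forall fun _ h => absurd hA h
    have hi := h i (Finset.mem_univ i)
    rw [← coe_sval hA] at hi
    filter_upwards [(hUy i).2 _ (lt_coe_sub_of_coe_add_lt hi)] with N hN _
    linarith
  filter_upwards [hev] with N hN
  obtain ⟨i, hi, hmax⟩ := exists_colMax_eq (U N) hl
  exact hmax ▸ hN i hi

lemma exists_lt_of_svec_lt {y : Fin m → WithBot ℝ} {k : Fin q}
    (hPsum : ∑ l, P k l = 1) {r : ℝ} (h : svec A P y k < r) :
    ∃ R : Fin n → ℝ, (∀ l, zvec A y l < R l) ∧ ∑ l, P k l * R l < r := by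
  classical
  unfold svec at h
  split_ifs at h with hbot
  · obtain ⟨l₀, hl₀, hz⟩ := hbot
    -- `z_{l₀}(y) = -∞` carries positive weight: lower the bound there far enough
    set R₀ : Fin n → ℝ := fun l => sval (zvec A y l) + 1
    set d := (∑ l, P k l * R₀ l - r + 1) / P k l₀
    refine ⟨fun l => R₀ l - if l = l₀ then d else 0, fun l => ?_, ?_⟩
    · by_cases hl : l = l₀
      · subst hl; rw [hz]; exact WithBot.bot_lt_coe _
      · simpa [hl, R₀] using lt_coe_sval_add (zvec A y l) one_pos
    · have : P k l₀ * d = ∑ l, P k l * R₀ l - r + 1 := mul_div_cancel₀ _ hl₀.ne'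
      simp only [mul_sub, Finset.sum_sub_distrib, mul_ite, mul_zero, Finset.sum_ite_eq',
        Finset.mem_univ, if_true]
      linarith
  · rw [WithBot.coe_lt_coe] at h
    have hε : 0 < (r - ∑ l, P k l * sval (zvec A y l)) / 2 := by linarith
    refine ⟨fun l => sval (zvec A y l) + (r - ∑ l, P k l * sval (zvec A y l)) / 2,
      fun l => lt_coe_sval_add _ hε, ?_⟩
    rw [sum_mul_add_const hPsum]
    linarith

lemma TendstoT.exists_eventually_sum_colMax_le {U : ℕ → Fin m → ℝ} {y : Fin m → WithBot ℝ}
    (hUy : TendstoT U y) (hAcol : ∀ j, ∃ i, A i j ≠ ⊥) {k : Fin q} (hPnn : ∀ l, 0 ≤ P k l)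
    (hPsum : ∑ l, P k l = 1) {r : ℝ} (h : svec A P y k < r) :
    ∃ r' < r, ∀ᶠ N in atTop, ∑ l, P k l * colMax A (U N) l ≤ r' := by
  obtain ⟨R, hR, hRr⟩ := exists_lt_of_svec_lt hPsum h
  refine ⟨_, hRr, ?_⟩
  filter_upwards [eventually_all.2 fun l => hUy.eventually_colMax_lt (hAcol l) (hR l)] with N hN
  exact Finset.sum_le_sum fun l _ => mul_le_mul_of_nonneg_left (hN l).le (hPnn l)

lemma TendstoT.coe_add_le_svec {U : ℕ → Fin m → ℝ} {y : Fin m → WithBot ℝ}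
    (hUy : TendstoT U y) (hAcol : ∀ j, ∃ i, A i j ≠ ⊥) {k : Fin q} (hPnn : ∀ l, 0 ≤ P k l)
    (hPsum : ∑ l, P k l = 1) {α : ℕ → ℝ} (hα0 : ∀ N, 0 ≤ α N) (hα : Tendsto α atTop (𝓝 1))
    {i : Fin m} {b c C : ℝ} (hyi : y i = c)
    (hU : ∀ N, U N i + b ≤ α N * ∑ l, P k l * colMax A (U N) l + (1 - α N) * C) :
    ((c + b : ℝ) : WithBot ℝ) ≤ svec A P y k := by
  refine le_of_forall_gt_imp_ge_of_dense fun a ha => ?_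
  lift a to ℝ using ne_bot_of_gt ha
  obtain ⟨r', hr', hev⟩ := hUy.exists_eventually_sum_colMax_le hAcol hPnn hPsum ha
  have hlim : Tendsto (fun N => α N * r' + (1 - α N) * C) atTop (𝓝 r') := by
    simpa using (hα.mul_const r').add (((tendsto_const_nhds (x := (1 : ℝ))).sub hα).mul_const C)
  have := le_of_tendsto_of_tendsto (((hUy i).1 c hyi).add_const b) hlim <| by
    filter_upwards [hev] with N hN
    exact (hU N).trans (by gcongr; exact hα0 N)
  exact WithBot.coe_le_coe.2 (by linarith)

theorem feasT_dualShapleyT_of_not_feasR_shapley (hAcol : ∀ j, ∃ i, A i j ≠ ⊥)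
    (hBrow : ∀ i, ∃ k, B i k ≠ ⊥) (hPnn : ∀ k l, 0 ≤ P k l) (hPsum : ∀ k, ∑ l, P k l = 1)
    (hF : ¬ FeasR (shapley A B P)) : FeasT (dualShapleyT A B P) := by
  have : Nonempty (Fin n) := by
    by_contra h
    exact hF ⟨0, fun j => (h ⟨j⟩).elim⟩
  have : Nonempty (Fin m) := ⟨(hAcol (Classical.arbitrary _)).choose⟩
  obtain ⟨C, hC⟩ := Finite.exists_le fun p : Fin m × Fin n => sval (A p.1 p.2)
  have hα0 : ∀ N : ℕ, 0 ≤ 1 - 1 / ((N : ℝ) + 1) := fun N => by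
    rw [sub_nonneg]; exact div_le_one_of_le₀ (by simp) (by positivity)
  have hα : Tendsto (fun N : ℕ => 1 - 1 / ((N : ℝ) + 1)) atTop (𝓝 1) := by
    simpa using (tendsto_const_nhds (x := (1 : ℝ))).sub tendsto_one_div_add_atTop_nhds_zero_nat
  choose U hU0 hUmax hU using fun N : ℕ => exists_normalized_discounted_dual_solution hAcol hBrow
    hPnn hPsum hF (fun i l => hC (i, l)) (hα0 N) (sub_lt_self 1 (by positivity))
  obtain ⟨φ, hφ, y, hy⟩ := exists_subseq_tendstoT U hU0
  refine ⟨y, fun hy0 => ?_, fun i => ?_⟩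
  · obtain ⟨N, hN⟩ := (eventually_all.2 fun i =>
      (hy i).2 (-1) (by simp [congrFun hy0 i])).exists
    obtain ⟨i, hi⟩ := hUmax (φ N)
    linarith [hN i]
  · show y i ≤ dualShapleyT A B P y i
    cases hyi : y i using WithBot.recBotCoe with
    | bot => exact bot_le
    | coe c =>
      exact (coe_le_dualShapleyT_iff (hBrow i)).2 fun k hk =>
        hy.coe_add_le_svec hAcol (hPnn k) (hPsum k) (fun N => hα0 _)
          (hα.comp hφ.tendsto_atTop) hyi fun N => hU (φ N) i k hk

theorem feasT_dualShapleyT_iff_not_feasR_shapley (hAcol : ∀ j, ∃ i, A i j ≠ ⊥)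
    (hBrow : ∀ i, ∃ k, B i k ≠ ⊥) (hPnn : ∀ k l, 0 ≤ P k l) (hPsum : ∀ k, ∑ l, P k l = 1) :
    FeasT (dualShapleyT A B P) ↔ ¬ FeasR (shapley A B P) :=
  ⟨not_feasR_shapley_of_feasT_dualShapleyT hBrow hPnn hPsum,
    feasT_dualShapleyT_of_not_feasR_shapley hAcol hBrow hPnn hPsum⟩

def rowSub (B : Fin m → Fin q → WithBot ℝ) (w : Fin m → ℝ) : Fin m → Fin q → WithBot ℝ :=
  fun i k => B i k + ((-w i : ℝ) : WithBot ℝ)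

lemma rowSub_ne_bot {w : Fin m → ℝ} {i : Fin m} {k : Fin q} :
    rowSub B w i k ≠ ⊥ ↔ B i k ≠ ⊥ := by
  simp [rowSub]

lemma sval_rowSub {w : Fin m → ℝ} {i : Fin m} {k : Fin q} (h : B i k ≠ ⊥) :
    sval (rowSub B w i k) = sval (B i k) - w i := by
  rw [rowSub, sval_add h WithBot.coe_ne_bot, sval_coe, sub_eq_add_neg]

lemma pertT_dualShapleyT (w : Fin m → ℝ) :
    pertT w (dualShapleyT A B P) = dualShapleyT A (rowSub B w) P := by
  classical
  funext y i
  simp only [pertT, dualShapleyT, rowSub_ne_bot]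
  split_ifs with h
  · rw [Finset.apply_inf'_eq_inf'_comp h _ fun a b => (min_add_add_left _ a b).symm]
    refine Finset.inf'_congr h rfl fun k hk => ?_
    rw [Function.comp_apply]
    split_ifs
    · exact WithBot.add_bot _
    · rw [← WithBot.coe_add, sval_rowSub (Finset.mem_filter.1 hk).2]
      ring_nf
  · rfl

lemma shapley_rowSub_le (hAcol : ∀ j, ∃ i, A i j ≠ ⊥) (hBrow : ∀ i, ∃ k, B i k ≠ ⊥)
    {w : Fin m → ℝ} {c : ℝ} (hc : ∀ i, -w i ≤ c) (x : Fin n → ℝ) (j : Fin n) :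
    shapley A (rowSub B w) P x j ≤ pertR (fun _ => c) (shapley A B P) x j := by
  have := shapley_le_add (B' := rowSub B w) (P' := P) (x' := x) (B := B) (P := P) (x := x)
    (c := c) (hAcol j) (fun i => (hBrow i).imp fun _ => rowSub_ne_bot.2) fun i k hk =>
    ⟨rowSub_ne_bot.1 hk, by rw [sval_rowSub (rowSub_ne_bot.1 hk)]; linarith [hc i]⟩
  rw [pertR]; linarith

lemma pertR_le_shapley_rowSub (hAcol : ∀ j, ∃ i, A i j ≠ ⊥) (hBrow : ∀ i, ∃ k, B i k ≠ ⊥)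
    {w : Fin m → ℝ} {c : ℝ} (hc : ∀ i, c ≤ -w i) (x : Fin n → ℝ) (j : Fin n) :
    pertR (fun _ => c) (shapley A B P) x j ≤ shapley A (rowSub B w) P x j := by
  have := shapley_le_add (B' := B) (P' := P) (x' := x) (B := rowSub B w) (P := P) (x := x)
    (c := -c) (hAcol j) hBrow fun i k hk =>
    ⟨rowSub_ne_bot.2 hk, by rw [sval_rowSub hk]; linarith [hc i]⟩
  rw [pertR]; linarith

end ShapleyGame

theorem stmt3_general
    (A : Fin m → Fin n → WithBot ℝ) (B : Fin m → Fin q → WithBot ℝ)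
    (P : Fin q → Fin n → ℝ)
    (hAcol : ∀ j, ∃ i, A i j ≠ ⊥)
    (hBrow : ∀ i, ∃ k, B i k ≠ ⊥)
    (hPnn : ∀ k l, 0 ≤ P k l)
    (hPsum : ∀ k, ∑ l, P k l = 1) :
    (FeasR (shapley A B P) →
      sInf ((fun u : Fin n → ℝ => (‖u‖₊ : ℝ≥0∞)) ''
          {u | ¬ FeasR (pertR u (shapley A B P))}) =
      sInf ((fun w : Fin m → ℝ => (‖w‖₊ : ℝ≥0∞)) ''
          {w | FeasT (pertT w (dualShapleyT A B P))})) ∧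
    (¬ FeasR (shapley A B P) →
      sInf ((fun u : Fin n → ℝ => (‖u‖₊ : ℝ≥0∞)) ''
          {u | FeasR (pertR u (shapley A B P))}) =
      sInf ((fun w : Fin m → ℝ => (‖w‖₊ : ℝ≥0∞)) ''
          {w | ¬ FeasT (pertT w (dualShapleyT A B P))})) := by
  have hdual (w : Fin m → ℝ) :
      FeasT (pertT w (dualShapleyT A B P)) ↔ ¬ FeasR (shapley A (rowSub B w) P) := by
    rw [pertT_dualShapleyT]
    exact feasT_dualShapleyT_iff_not_feasR_shapley hAcol
      (fun i => (hBrow i).imp fun _ => rowSub_ne_bot.2) hPnn hPsum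
  have hle (w : Fin m → ℝ) (c : ℝ) (hc : ∀ i, -w i ≤ c) :=
    FeasR.mono (shapley_rowSub_le (P := P) hAcol hBrow hc)
  have hge (w : Fin m → ℝ) (c : ℝ) (hc : ∀ i, c ≤ -w i) :=
    FeasR.mono (pertR_le_shapley_rowSub (P := P) hAcol hBrow hc)
  have hnorm (w : Fin m → ℝ) (i : Fin m) : -‖w‖ ≤ w i ∧ w i ≤ ‖w‖ :=
    abs_le.1 (norm_le_pi_norm w i)
  refine ⟨fun _ => sInf_image_eq_sInf_image (fun u hu => ⟨fun _ => ‖u‖, ?_, ?_⟩)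
      (fun w hw => ⟨fun _ => -‖w‖, ?_, ?_⟩),
    fun _ => sInf_image_eq_sInf_image (fun u hu => ⟨fun _ => -‖u‖, ?_, ?_⟩)
      (fun w hw => ⟨fun _ => ‖w‖, ?_, ?_⟩)⟩
  · exact (hdual _).2 fun h =>
      hu (.mono (pertR_neg_norm_le_pertR u _) (hle _ _ (fun _ => le_rfl) h))
  · exact coe_nnnorm_const_le (by simp)
  · exact fun h => (hdual w).1 hw (hge w _ (fun i => neg_le_neg (hnorm w i).2) h)
  · exact coe_nnnorm_const_le (by simp)
  · exact fun h =>
      (hdual _).1 h (hge _ _ (fun _ => (neg_neg _).ge) (.mono (pertR_le_pertR_norm u _) hu))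
  · exact coe_nnnorm_const_le (by simp)
  · exact hle w _ (fun i => neg_le.1 (hnorm w i).1) (not_not.1 (mt (hdual w).2 hw))
  · exact coe_nnnorm_const_le (by simp)

/-- The condition number of `𝒫_ℝ(F)` coincides with the condition number of `𝒫(F*)`
(equalities of infima in `[0, +∞]`, with `inf ∅ = +∞`). -/
theorem stmt3 (hm : 0 < m) (hn : 0 < n) (hq : 0 < q)
    (A : Fin m → Fin n → WithBot ℝ) (B : Fin m → Fin q → WithBot ℝ)
    (P : Fin q → Fin n → ℝ)
    (hAcol : ∀ j, ∃ i, A i j ≠ ⊥)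
    (hArow : ∀ i, ∃ j, A i j ≠ ⊥)
    (hBrow : ∀ i, ∃ k, B i k ≠ ⊥)
    (hPnn : ∀ k l, 0 ≤ P k l)
    (hPsum : ∀ k, ∑ l, P k l = 1) :
    (FeasR (shapley A B P) →
      sInf ((fun u : Fin n → ℝ => (‖u‖₊ : ℝ≥0∞)) ''
          {u | ¬ FeasR (pertR u (shapley A B P))}) =
      sInf ((fun w : Fin m → ℝ => (‖w‖₊ : ℝ≥0∞)) ''
          {w | FeasT (pertT w (dualShapleyT A B P))})) ∧
    (¬ FeasR (shapley A B P) →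
      sInf ((fun u : Fin n → ℝ => (‖u‖₊ : ℝ≥0∞)) ''
          {u | FeasR (pertR u (shapley A B P))}) =
      sInf ((fun w : Fin m → ℝ => (‖w‖₊ : ℝ≥0∞)) ''
          {w | ¬ FeasT (pertT w (dualShapleyT A B P))})) :=
  stmt3_general A B P hAcol hBrow hPnn hPsum
end
end

section
/- Let A be an m×n matrix and B an m×q matrix with entries in T = ℝ ∪ {−∞} such that every column of A has at least one finite entry, every row of A has at least one finite entry, and every row of B has at least one finite entry, and let P be a q×n row-stochastic matrix; let F : ℝⁿ → ℝⁿ be the associated Shapley operator and F* : Tᵐ → Tᵐ the dual Shapley operator. Then either there exists y ∈ Tᵐ with y ≠ 𝟘 and y ≤ F*(y), or there exists x ∈ ℝⁿ with x_i < F(x)_i for all i. -/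
noncomputable section

variable {m n q : ℕ}

/-!
Write `G` for the restriction of `F*` to `ℝᵐ`. Both `F` and `G` are monotone and commute with the
addition of constants, and they are in duality: `max_l (-u_l - z_l(y))` does not increase when
`(u, y)` is replaced by `(F u, G y)`.

If some iterate `Gᵖ(0)` is negative, say `Gᵖ(0) ≤ c < 0`, then `G^{sp}(0) ≤ s c → -∞`, so by
duality `F^{sp}(0) > 0` for large `s`, and the maximum of the shifted orbit `Fᵗ(0) - t ε`
(`t < sp`) is a vector `x` with `x < F x`.

Otherwise every `Gᵖ(0)` has a nonnegative coordinate. Subtracting the running maximum of the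
orbit gives `y_p ≤ 0` with `y_{p+1} ≤ G y_p` and a coordinate that is frequently bounded below.
The coordinatewise limsup of `y_p` in `T` is then a nonzero `y` with `y ≤ F*(y)`: if
`-B_ik + s_k(y) < c` then eventually `s_k(y_p) < c + B_ik`, hence eventually `y_{p+1,i} < c`.
The convention `s_k(y) = -∞` is the right one because a positive mass `P_kl` on a coordinate
`z_l(y_p) → -∞` drives `s_k(y_p)` to `-∞`.
-/

namespace ShapleyDuality

open Finset Filter

section FiniteSupInf

variable {α : Type*} {s t : Finset α} {f g : α → ℝ} {b : ℝ}

def sup0 (s : Finset α) (f : α → ℝ) : ℝ := if h : s.Nonempty then s.sup' h f else 0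

def inf0 (s : Finset α) (f : α → ℝ) : ℝ := if h : s.Nonempty then s.inf' h f else 0

theorem sup0_of_nonempty (h : s.Nonempty) (f : α → ℝ) : sup0 s f = s.sup' h f := dif_pos h

theorem inf0_of_nonempty (h : s.Nonempty) (f : α → ℝ) : inf0 s f = s.inf' h f := dif_pos h

theorem le_sup0 {a : α} (ha : a ∈ s) (f : α → ℝ) : f a ≤ sup0 s f := by
  rw [sup0_of_nonempty ⟨a, ha⟩]
  exact le_sup' f ha

theorem inf0_le {a : α} (ha : a ∈ s) (f : α → ℝ) : inf0 s f ≤ f a := by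
  rw [inf0_of_nonempty ⟨a, ha⟩]
  exact inf'_le f ha

theorem sup0_le (h : s.Nonempty) (hb : ∀ a ∈ s, f a ≤ b) : sup0 s f ≤ b := by
  rw [sup0_of_nonempty h]
  exact sup'_le h f hb

theorem le_inf0 (h : s.Nonempty) (hb : ∀ a ∈ s, b ≤ f a) : b ≤ inf0 s f := by
  rw [inf0_of_nonempty h]
  exact le_inf' h f hb

theorem exists_mem_eq_sup0 (h : s.Nonempty) (f : α → ℝ) : ∃ a ∈ s, sup0 s f = f a := by
  rw [sup0_of_nonempty h]
  exact exists_mem_eq_sup' h f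

theorem exists_mem_eq_inf0 (h : s.Nonempty) (f : α → ℝ) : ∃ a ∈ s, inf0 s f = f a := by
  rw [inf0_of_nonempty h]
  exact exists_mem_eq_inf' h f

theorem sup0_lt (h : s.Nonempty) (hb : ∀ a ∈ s, f a < b) : sup0 s f < b := by
  obtain ⟨a, ha, he⟩ := exists_mem_eq_sup0 h f
  exact he ▸ hb a ha

theorem sup0_mono_fun (h : ∀ a ∈ s, f a ≤ g a) : sup0 s f ≤ sup0 s g := by
  rcases s.eq_empty_or_nonempty with rfl | hs
  · simp [sup0]
  · exact sup0_le hs fun a ha => (h a ha).trans (le_sup0 ha g)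

theorem inf0_mono_fun (h : ∀ a ∈ s, f a ≤ g a) : inf0 s f ≤ inf0 s g := by
  rcases s.eq_empty_or_nonempty with rfl | hs
  · simp [inf0]
  · exact le_inf0 hs fun a ha => (inf0_le ha f).trans (h a ha)

theorem sup0_mono (hst : s ⊆ t) (hs : s.Nonempty) : sup0 s f ≤ sup0 t f :=
  sup0_le hs fun _ ha => le_sup0 (hst ha) f

theorem sup0_add_const (h : s.Nonempty) (f : α → ℝ) (c : ℝ) :
    sup0 s (fun a => f a + c) = sup0 s f + c := by
  obtain ⟨a, ha, he⟩ := exists_mem_eq_sup0 h f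
  refine le_antisymm (sup0_le h fun a' ha' => ?_) (he ▸ le_sup0 ha (fun a => f a + c))
  linarith [le_sup0 ha' f]

theorem inf0_add_const (h : s.Nonempty) (f : α → ℝ) (c : ℝ) :
    inf0 s (fun a => f a + c) = inf0 s f + c := by
  obtain ⟨a, ha, he⟩ := exists_mem_eq_inf0 h f
  refine le_antisymm (he ▸ inf0_le ha (fun a => f a + c)) (le_inf0 h fun a' ha' => ?_)
  linarith [inf0_le ha' f]

end FiniteSupInf

section Topical

variable {ι : Type*} {f : (ι → ℝ) → ι → ℝ}

theorem iterate_add_const (hf : ∀ x (c : ℝ), f (fun i => x i + c) = fun i => f x i + c)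
    (p : ℕ) (x : ι → ℝ) (c : ℝ) : f^[p] (fun i => x i + c) = fun i => f^[p] x i + c := by
  induction p with
  | zero => rfl
  | succ p ih => rw [Function.iterate_succ_apply', ih, hf, Function.iterate_succ_apply']

theorem exists_lt_forall_le_of_forall_lt [Finite ι] {v : ι → ℝ} {a : ℝ} (h : ∀ i, v i < a) :
    ∃ c < a, v ≤ fun _ => c := by
  rcases isEmpty_or_nonempty ι with hι | hι
  · exact ⟨a - 1, by linarith, isEmptyElim⟩
  · obtain ⟨i₀, hi₀⟩ := Finite.exists_max v
    exact ⟨v i₀, h i₀, hi₀⟩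

theorem iterate_mul_le (hmono : Monotone f)
    (hf : ∀ x (c : ℝ), f (fun i => x i + c) = fun i => f x i + c)
    {p : ℕ} {c : ℝ} (h : f^[p] 0 ≤ fun _ => c) (s : ℕ) : f^[s * p] 0 ≤ fun _ => s * c := by
  induction s with
  | zero => intro i; simp
  | succ s ih =>
    intro i
    have hshift : f^[p] (f^[s * p] 0) ≤ f^[p] (fun i => (0 : ι → ℝ) i + s * c) :=
      hmono.iterate p fun i => by simpa using ih i
    rw [iterate_add_const hf] at hshift
    rw [add_mul, one_mul, add_comm, Function.iterate_add_apply]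
    push_cast
    linarith [hshift i, h i]

/-- The max-of-shifted-orbit argument: if `fᵖ(0) > 0`, then `x = max_{t < p} (fᵗ(0) - t ε)`
satisfies `x + ε ≤ f x` for `ε = min_i fᵖ(0)_i / p`. -/
theorem exists_lt_of_iterate_pos [Finite ι] (hmono : Monotone f)
    (hf : ∀ x (c : ℝ), f (fun i => x i + c) = fun i => f x i + c)
    {p : ℕ} (h : ∀ i, 0 < f^[p] 0 i) : ∃ x : ι → ℝ, ∀ i, x i < f x i := by
  rcases isEmpty_or_nonempty ι with hι | hι
  · exact ⟨0, isEmptyElim⟩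
  obtain ⟨i₀, hi₀⟩ := Finite.exists_min (f^[p] 0)
  have hp : 0 < p := Nat.pos_of_ne_zero fun hp => by simpa [hp] using h i₀
  set ε := f^[p] 0 i₀ / p with hε_def
  have hε : 0 < ε := div_pos (h i₀) (by exact_mod_cast hp)
  have hpε : ∀ i, p * ε ≤ f^[p] 0 i := fun i => by
    rw [hε_def, mul_div_cancel₀ _ (by positivity)]
    exact hi₀ i
  set g : ℕ → ι → ℝ := fun t i => f^[t] 0 i - t * ε
  set x : ι → ℝ := fun i => sup0 (range p) fun t => g t i
  have hstep : ∀ t < p, ∀ i, g (t + 1) i + ε ≤ f x i := by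
    intro t ht i
    have hle : f (fun i => f^[t] 0 i + -(t * ε)) ≤ f x :=
      hmono fun i => le_sup0 (mem_range.2 ht) fun t => g t i
    rw [hf, ← Function.iterate_succ_apply' f] at hle
    have := hle i
    simp only [g]
    push_cast
    linarith
  refine ⟨x, fun i => ?_⟩
  obtain ⟨t, ht, hxt⟩ := exists_mem_eq_sup0 (nonempty_range_iff.2 hp.ne') fun t => g t i
  obtain ⟨t', ht', hle⟩ : ∃ t' < p, x i ≤ g (t' + 1) i := by
    rcases Nat.eq_zero_or_eq_succ_pred t with rfl | hsucc
    · refine ⟨p - 1, by omega, ?_⟩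
      rw [Nat.sub_add_cancel hp]
      simp only [x, hxt, g]
      simpa using hpε i
    · exact ⟨t - 1, by have := mem_range.1 ht; omega,
        by rw [show t - 1 + 1 = t by omega]; exact hxt.le⟩
  linarith [hstep t' ht' i]

/-- Subtracting the running maximum `U_p = max_{t ≤ p, i} fᵗ(0)_i` from the orbit of `0`. -/
theorem exists_normalized_orbit [Fintype ι]
    (hf : ∀ x (c : ℝ), f (fun i => x i + c) = fun i => f x i + c)
    (h : ∀ p, ∃ i, 0 ≤ f^[p] 0 i) :
    ∃ y : ℕ → ι → ℝ, (∀ p, y p ≤ 0) ∧ (∀ p, y (p + 1) ≤ f (y p)) ∧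
      ∃ i c, ∃ᶠ p in atTop, c ≤ y p i := by
  obtain ⟨i₀, -⟩ := h 0
  have hne : ∀ p, (range (p + 1) ×ˢ (univ : Finset ι)).Nonempty := fun p => ⟨(0, i₀), by simp⟩
  set U : ℕ → ℝ := fun p => sup0 (range (p + 1) ×ˢ univ) fun ti => f^[ti.1] 0 ti.2
  have hle_U : ∀ {t p} (i : ι), t ≤ p → f^[t] 0 i ≤ U p := fun {t _} i ht =>
    le_sup0 (a := (t, i)) (mem_product.2 ⟨mem_range.2 (Nat.lt_succ_of_le ht), mem_univ i⟩)
      fun ti => f^[ti.1] 0 ti.2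
  have hU_mono : Monotone U := fun p p' hpp' =>
    sup0_mono (product_subset_product (range_subset_range.2 (by omega)) subset_rfl) (hne p)
  refine ⟨fun p i => f^[p] 0 i - U p, fun p i => by simpa using hle_U i le_rfl,
    fun p i => ?_, ?_⟩
  · have hshift := congrFun (hf (f^[p] 0) (-U p)) i
    simp only [← sub_eq_add_neg, ← Function.iterate_succ_apply' f] at hshift
    rw [hshift]
    linarith [hU_mono (Nat.le_succ p)]
  suffices ∃ c, ∃ᶠ p in atTop, ∃ i, c ≤ f^[p] 0 i - U p by
    obtain ⟨c, hc⟩ := this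
    obtain ⟨i, hi⟩ := frequently_exists.1 hc
    exact ⟨i, c, hi⟩
  by_cases hbdd : BddAbove (Set.range U)
  · obtain ⟨C, hC⟩ := hbdd
    refine ⟨-C, Frequently.of_forall fun p => ?_⟩
    obtain ⟨i, hi⟩ := h p
    exact ⟨i, by linarith [hC ⟨p, rfl⟩]⟩
  · refine ⟨0, frequently_atTop.2 fun N => ?_⟩
    obtain ⟨_, ⟨p, rfl⟩, hNp⟩ := not_bddAbove_iff.1 hbdd (U N)
    obtain ⟨⟨t, i⟩, hti, hUp⟩ := exists_mem_eq_sup0 (hne p) fun ti => f^[ti.1] 0 ti.2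
    have htp : t ≤ p := Nat.lt_succ_iff.1 (mem_range.1 (mem_product.1 hti).1)
    have hNt : N ≤ t := by
      by_contra! htN
      linarith [hle_U i htN.le]
    exact ⟨t, hNt, i, by linarith [hU_mono htp]⟩

end Topical

section LimsupBot

variable {α : Type*} {l : Filter α} {u : α → ℝ} {c : ℝ}

open Classical in
/-- The limsup of `u` in `T = ℝ ∪ {-∞}`; `Filter.limsup` in `ℝ` has a junk value when `u → -∞`. -/
def limsupBot (u : α → ℝ) (l : Filter α) : WithBot ℝ :=
  if Tendsto u l atBot then ⊥ else (limsup u l : ℝ)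

theorem eventually_lt_of_limsupBot_lt (hu : IsBoundedUnder (· ≤ ·) l u)
    (h : limsupBot u l < c) : ∀ᶠ a in l, u a < c := by
  unfold limsupBot at h
  split_ifs at h with htends
  · exact htends.eventually_lt_atBot c
  · exact eventually_lt_of_limsup_lt (WithBot.coe_lt_coe.1 h) hu

theorem limsupBot_le_of_eventually_le (h : ∀ᶠ a in l, u a ≤ c) : limsupBot u l ≤ c := by
  unfold limsupBot
  split_ifs with htends
  · exact bot_le
  · obtain ⟨b, hb⟩ : ∃ b, ∃ᶠ a in l, b ≤ u a := by
      by_contra! hfreq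
      exact htends (tendsto_atBot.2 fun b => (hfreq b).mono fun _ => le_of_lt)
    exact WithBot.coe_le_coe.2 (limsup_le_of_le (IsCoboundedUnder.of_frequently_ge hb) h)

theorem limsupBot_ne_bot (h : ∃ᶠ a in l, c ≤ u a) : limsupBot u l ≠ ⊥ := by
  unfold limsupBot
  split_ifs with htends
  · obtain ⟨a, hle, hlt⟩ := (h.and_eventually (htends.eventually_lt_atBot c)).exists
    exact absurd hle hlt.not_ge
  · exact WithBot.coe_ne_bot

def limsupVec {ι : Type*} (y : ℕ → ι → ℝ) : ι → WithBot ℝ := fun i => limsupBot (y · i) atTop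

end LimsupBot

section Operators

variable (A : Fin m → Fin n → WithBot ℝ) (B : Fin m → Fin q → WithBot ℝ) (P : Fin q → Fin n → ℝ)

def colSupp (j : Fin n) : Finset (Fin m) := univ.filter fun i => A i j ≠ ⊥

-- Classical decidability, as in `dualShapleyT`, so that the two index sets agree.
open Classical in
def rowSupp (i : Fin m) : Finset (Fin q) := univ.filter fun k => B i k ≠ ⊥

def zReal (y : Fin m → ℝ) (l : Fin n) : ℝ := sup0 (colSupp A l) fun i => sval (A i l) + y i

def sReal (y : Fin m → ℝ) (k : Fin q) : ℝ := ∑ l, P k l * zReal A y l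

/-- The restriction of `F*` to `ℝᵐ`. -/
def dualShapleyReal (y : Fin m → ℝ) : Fin m → ℝ := fun i =>
  inf0 (rowSupp B i) fun k => -sval (B i k) + sReal A P y k

def maxPayoff (x : Fin n → ℝ) (i : Fin m) : ℝ :=
  sup0 (rowSupp B i) fun k => sval (B i k) + ∑ l, P k l * x l

def shapleyFinset (x : Fin n → ℝ) : Fin n → ℝ := fun j =>
  inf0 (colSupp A j) fun i => -sval (A i j) + maxPayoff B P x i

variable {A B P}

theorem sval_coe (x : ℝ) : sval x = x := WithBot.unbotD_coe 0 x

theorem coe_sval {a : WithBot ℝ} (h : a ≠ ⊥) : (sval a : WithBot ℝ) = a := by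
  lift a to ℝ using h
  rw [sval_coe]

theorem shapley_eq_shapleyFinset (hA : ∀ j, (colSupp A j).Nonempty)
    (hB : ∀ i, (rowSupp B i).Nonempty) : shapley A B P = shapleyFinset A B P := by
  funext x j
  have hmax : ∀ i, sSup {s : ℝ | ∃ k, B i k ≠ ⊥ ∧ s = sval (B i k) + ∑ l, P k l * x l}
      = maxPayoff B P x i := fun i => by
    rw [maxPayoff, sup0_of_nonempty (hB i), sup'_eq_csSup_image]
    congr 1
    ext
    simp [rowSupp, eq_comm]
  simp only [shapley, hmax]
  rw [shapleyFinset, inf0_of_nonempty (hA j), inf'_eq_csInf_image]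
  congr 1
  ext
  simp [colSupp, eq_comm]

theorem zReal_mono {y y' : Fin m → ℝ} (h : y ≤ y') (l : Fin n) : zReal A y l ≤ zReal A y' l :=
  sup0_mono_fun fun i _ => add_le_add_right (h i) _

theorem zReal_add_const (hA : ∀ j, (colSupp A j).Nonempty) (y : Fin m → ℝ) (c : ℝ) (l : Fin n) :
    zReal A (fun i => y i + c) l = zReal A y l + c := by
  simp only [zReal, ← add_assoc]
  exact sup0_add_const (hA l) _ c

theorem sReal_mono (hPnn : ∀ k l, 0 ≤ P k l) {y y' : Fin m → ℝ} (h : y ≤ y') (k : Fin q) :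
    sReal A P y k ≤ sReal A P y' k :=
  sum_le_sum fun l _ => mul_le_mul_of_nonneg_left (zReal_mono h l) (hPnn k l)

theorem sum_mul_add_const (hPsum : ∀ k, ∑ l, P k l = 1) (x : Fin n → ℝ) (c : ℝ) (k : Fin q) :
    ∑ l, P k l * (x l + c) = ∑ l, P k l * x l + c := by
  simp only [mul_add, sum_add_distrib, ← sum_mul, hPsum k, one_mul]

theorem sReal_add_const (hA : ∀ j, (colSupp A j).Nonempty) (hPsum : ∀ k, ∑ l, P k l = 1)
    (y : Fin m → ℝ) (c : ℝ) (k : Fin q) :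
    sReal A P (fun i => y i + c) k = sReal A P y k + c := by
  simp only [sReal, zReal_add_const hA]
  exact sum_mul_add_const hPsum _ c k

theorem dualShapleyReal_mono (hPnn : ∀ k l, 0 ≤ P k l) : Monotone (dualShapleyReal A B P) :=
  fun _ _ h _ => inf0_mono_fun fun k _ => add_le_add_right (sReal_mono hPnn h k) _

theorem dualShapleyReal_add_const (hA : ∀ j, (colSupp A j).Nonempty)
    (hB : ∀ i, (rowSupp B i).Nonempty) (hPsum : ∀ k, ∑ l, P k l = 1) (y : Fin m → ℝ) (c : ℝ) :
    dualShapleyReal A B P (fun i => y i + c) = fun i => dualShapleyReal A B P y i + c := by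
  funext i
  simp only [dualShapleyReal, sReal_add_const hA hPsum, ← add_assoc]
  exact inf0_add_const (hB i) _ c

theorem shapleyFinset_mono (hPnn : ∀ k l, 0 ≤ P k l) : Monotone (shapleyFinset A B P) :=
  fun _ _ h _ => inf0_mono_fun fun _ _ => add_le_add_right (sup0_mono_fun fun k _ =>
    add_le_add_right (sum_le_sum fun l _ => mul_le_mul_of_nonneg_left (h l) (hPnn k l)) _) _

theorem shapleyFinset_add_const (hA : ∀ j, (colSupp A j).Nonempty)
    (hB : ∀ i, (rowSupp B i).Nonempty) (hPsum : ∀ k, ∑ l, P k l = 1) (x : Fin n → ℝ) (c : ℝ) :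
    shapleyFinset A B P (fun l => x l + c) = fun j => shapleyFinset A B P x j + c := by
  have hmax : ∀ i, maxPayoff B P (fun l => x l + c) i = maxPayoff B P x i + c := fun i => by
    simp only [maxPayoff, sum_mul_add_const hPsum, ← add_assoc]
    exact sup0_add_const (hB i) _ c
  funext j
  simp only [shapleyFinset, hmax, ← add_assoc]
  exact inf0_add_const (hA j) _ c

theorem shapleyFinset_dualShapleyReal_pairing (hA : ∀ j, (colSupp A j).Nonempty)
    (hB : ∀ i, (rowSupp B i).Nonempty) (hPnn : ∀ k l, 0 ≤ P k l) (hPsum : ∀ k, ∑ l, P k l = 1)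
    {u : Fin n → ℝ} {y : Fin m → ℝ} {M : ℝ} (h : ∀ l, -u l - zReal A y l ≤ M) (l : Fin n) :
    -shapleyFinset A B P u l - zReal A (dualShapleyReal A B P y) l ≤ M := by
  obtain ⟨i, hi, hF⟩ := exists_mem_eq_inf0 (hA l) fun i => -sval (A i l) + maxPayoff B P u i
  obtain ⟨k, hk, hG⟩ := exists_mem_eq_inf0 (hB i) fun k => -sval (B i k) + sReal A P y k
  have hF : shapleyFinset A B P u l = -sval (A i l) + maxPayoff B P u i := hF
  have hG : dualShapleyReal A B P y i = -sval (B i k) + sReal A P y k := hG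
  have hz := le_sup0 hi fun i => sval (A i l) + dualShapleyReal A B P y i
  have hw := le_sup0 hk fun k => sval (B i k) + ∑ l, P k l * u l
  have hsum : ∑ l, P k l * (-u l - zReal A y l) = -∑ l, P k l * u l - sReal A P y k := by
    simp only [sReal, mul_sub, mul_neg, sum_sub_distrib, sum_neg_distrib]
  calc -shapleyFinset A B P u l - zReal A (dualShapleyReal A B P y) l
      ≤ ∑ l, P k l * (-u l - zReal A y l) := by
        rw [hsum]
        linarith [show zReal A (dualShapleyReal A B P y) l ≥ _ from hz,
          show maxPayoff B P u i ≥ _ from hw]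
    _ ≤ ∑ l, P k l * M := sum_le_sum fun l _ => mul_le_mul_of_nonneg_left (h l) (hPnn k l)
    _ = M := by rw [← sum_mul, hPsum k, one_mul]

end Operators

section Alternative

variable {A : Fin m → Fin n → WithBot ℝ} {B : Fin m → Fin q → WithBot ℝ} {P : Fin q → Fin n → ℝ}

theorem iterate_pairing (hA : ∀ j, (colSupp A j).Nonempty) (hB : ∀ i, (rowSupp B i).Nonempty)
    (hPnn : ∀ k l, 0 ≤ P k l) (hPsum : ∀ k, ∑ l, P k l = 1)
    {u : Fin n → ℝ} {y : Fin m → ℝ} {M : ℝ} (h : ∀ l, -u l - zReal A y l ≤ M) (p : ℕ) (l : Fin n) :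
    -(shapleyFinset A B P)^[p] u l - zReal A ((dualShapleyReal A B P)^[p] y) l ≤ M := by
  induction p generalizing l with
  | zero => exact h l
  | succ p ih =>
    rw [Function.iterate_succ_apply', Function.iterate_succ_apply']
    exact shapleyFinset_dualShapleyReal_pairing hA hB hPnn hPsum ih l

theorem zReal_le_zReal_zero_add (hA : ∀ j, (colSupp A j).Nonempty) {y : Fin m → ℝ} {d : ℝ}
    (h : y ≤ fun _ => d) (l : Fin n) : zReal A y l ≤ zReal A 0 l + d := by
  have := zReal_mono (A := A) (y' := fun i => (0 : Fin m → ℝ) i + d) (by simpa using h) l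
  rwa [zReal_add_const hA] at this

theorem exists_nonneg_iterate_dualShapleyReal (hA : ∀ j, (colSupp A j).Nonempty)
    (hB : ∀ i, (rowSupp B i).Nonempty) (hPnn : ∀ k l, 0 ≤ P k l) (hPsum : ∀ k, ∑ l, P k l = 1)
    (hF : ¬∃ x : Fin n → ℝ, ∀ j, x j < shapleyFinset A B P x j) (p : ℕ) :
    ∃ i, 0 ≤ (dualShapleyReal A B P)^[p] 0 i := by
  by_contra! hneg
  obtain ⟨c, hc, hpc⟩ := exists_lt_forall_le_of_forall_lt hneg
  have hdecay := iterate_mul_le (dualShapleyReal_mono hPnn)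
    (dualShapleyReal_add_const hA hB hPsum) hpc
  obtain ⟨M, hM⟩ := (Set.finite_range fun l => -(0 : Fin n → ℝ) l - zReal A 0 l).bddAbove
  have hlarge : ∀ᶠ s : ℕ in atTop, ∀ l, (s : ℝ) * c < -(M + zReal A 0 l) :=
    eventually_all.2 fun l =>
      (tendsto_natCast_atTop_atTop.atTop_mul_const_of_neg hc).eventually_lt_atBot _
  obtain ⟨s, hs⟩ := hlarge.exists
  refine hF (exists_lt_of_iterate_pos (shapleyFinset_mono hPnn)
    (shapleyFinset_add_const hA hB hPsum) (p := s * p) fun l => ?_)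
  have hpair := iterate_pairing hA hB hPnn hPsum (fun l => hM ⟨l, rfl⟩) (s * p) l
  have hz := zReal_le_zReal_zero_add hA (hdecay s) l
  linarith [hs l]

theorem lt_coe_sub_of_coe_add_lt {a c : ℝ} {x : WithBot ℝ} (h : (a : WithBot ℝ) + x < c) :
    x < ((c - a : ℝ) : WithBot ℝ) := by
  induction x using WithBot.recBotCoe with
  | bot => exact WithBot.bot_lt_coe _
  | coe x =>
    rw [← WithBot.coe_add, WithBot.coe_lt_coe] at h
    exact WithBot.coe_lt_coe.2 (by linarith)

variable {y : ℕ → Fin m → ℝ}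

theorem eventually_zReal_lt (hA : ∀ j, (colSupp A j).Nonempty) (hy0 : ∀ p, y p ≤ 0)
    {l : Fin n} {c : ℝ} (h : zvec A (limsupVec y) l < c) :
    ∀ᶠ p in atTop, zReal A (y p) l < c := by
  have hcoord : ∀ i ∈ colSupp A l, ∀ᶠ p in atTop, sval (A i l) + y p i < c := by
    intro i hi
    have hlt := (Finset.sup_lt_iff (WithBot.bot_lt_coe c)).1 h i (mem_univ i)
    rw [← coe_sval (mem_filter.1 hi).2] at hlt
    filter_upwards [eventually_lt_of_limsupBot_lt (isBoundedUnder_of ⟨0, fun p => hy0 p i⟩)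
      (lt_coe_sub_of_coe_add_lt hlt)] with p hp
    linarith
  filter_upwards [(eventually_all_finset _).2 hcoord] with p hp
  exact sup0_lt (hA l) hp

theorem eventually_sReal_lt_of_zvec_eq_bot (hA : ∀ j, (colSupp A j).Nonempty)
    (hPnn : ∀ k l, 0 ≤ P k l) (hy0 : ∀ p, y p ≤ 0) {k : Fin q} {l₀ : Fin n} (hP : 0 < P k l₀)
    (hz : zvec A (limsupVec y) l₀ = ⊥) (c : ℝ) : ∀ᶠ p in atTop, sReal A P (y p) k < c := by
  have hdrop : ∀ p, P k l₀ * (zReal A 0 l₀ - zReal A (y p) l₀)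
      ≤ sReal A P 0 k - sReal A P (y p) k := fun p => by
    simp only [sReal, ← sum_sub_distrib, ← mul_sub]
    exact single_le_sum (fun l _ => mul_nonneg (hPnn k l)
      (sub_nonneg.2 (zReal_mono (hy0 p) l))) (mem_univ l₀)
  filter_upwards [eventually_zReal_lt hA hy0 (l := l₀)
    (c := zReal A 0 l₀ + (c - sReal A P 0 k) / P k l₀) (hz ▸ WithBot.bot_lt_coe _)] with p hp
  have hgap : P k l₀ * (zReal A (y p) l₀ - zReal A 0 l₀) < c - sReal A P 0 k := by
    rw [← lt_div_iff₀' hP]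
    linarith
  linarith [hdrop p]

theorem eventually_sReal_lt (hA : ∀ j, (colSupp A j).Nonempty) (hPnn : ∀ k l, 0 ≤ P k l)
    (hPsum : ∀ k, ∑ l, P k l = 1) (hy0 : ∀ p, y p ≤ 0) {k : Fin q} {c : ℝ}
    (h : svec A P (limsupVec y) k < c) : ∀ᶠ p in atTop, sReal A P (y p) k < c := by
  unfold svec at h
  split_ifs at h with hbot
  · obtain ⟨l₀, hP, hz⟩ := hbot
    exact eventually_sReal_lt_of_zvec_eq_bot hA hPnn hy0 hP hz c
  push Not at hbot
  set z := zvec A (limsupVec y)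
  set S := ∑ l, P k l * sval (z l)
  obtain ⟨δ, hδ, hSδ⟩ : ∃ δ > 0, S + δ < c :=
    ⟨(c - S) / 2, by linarith [WithBot.coe_lt_coe.1 h], by linarith [WithBot.coe_lt_coe.1 h]⟩
  have hterm : ∀ᶠ p in atTop, ∀ l, P k l * zReal A (y p) l ≤ P k l * (sval (z l) + δ) := by
    refine eventually_all.2 fun l => ?_
    rcases (hPnn k l).eq_or_lt with h0 | hpos
    · simp [← h0]
    · have hlt : z l < ((sval (z l) + δ : ℝ) : WithBot ℝ) := by
        rw [← coe_sval (hbot l hpos), sval_coe]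
        exact WithBot.coe_lt_coe.2 (by linarith)
      filter_upwards [eventually_zReal_lt hA hy0 hlt] with p hp
      exact mul_le_mul_of_nonneg_left hp.le (hPnn k l)
  filter_upwards [hterm] with p hp
  calc sReal A P (y p) k ≤ ∑ l, P k l * (sval (z l) + δ) := sum_le_sum fun l _ => hp l
    _ = S + δ := sum_mul_add_const hPsum _ δ k
    _ < c := hSδ

theorem limsupVec_le_dualShapleyT (hA : ∀ j, (colSupp A j).Nonempty)
    (hB : ∀ i, (rowSupp B i).Nonempty) (hPnn : ∀ k l, 0 ≤ P k l) (hPsum : ∀ k, ∑ l, P k l = 1)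
    (hy0 : ∀ p, y p ≤ 0) (hy : ∀ p, y (p + 1) ≤ dualShapleyReal A B P (y p)) :
    limsupVec y ≤ dualShapleyT A B P (limsupVec y) := by
  intro i
  rw [dualShapleyT, dif_pos (by exact hB i)]
  refine le_inf' _ _ fun k hk => le_of_forall_gt_imp_ge_of_dense fun c hc => ?_
  induction c using WithBot.recBotCoe with
  | bot => exact absurd hc not_lt_bot
  | coe c =>
    have hs : svec A P (limsupVec y) k < ((c + sval (B i k) : ℝ) : WithBot ℝ) := by
      split_ifs at hc with hbot
      · rw [hbot]
        exact WithBot.bot_lt_coe _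
      · rw [← coe_sval hbot]
        exact WithBot.coe_lt_coe.2 (by linarith [WithBot.coe_lt_coe.1 hc])
    refine limsupBot_le_of_eventually_le ?_
    rw [← map_add_atTop_eq_nat 1]
    refine eventually_map.2 ?_
    filter_upwards [eventually_sReal_lt hA hPnn hPsum hy0 hs] with p hp
    have hG : dualShapleyReal A B P (y p) i ≤ -sval (B i k) + sReal A P (y p) k := inf0_le hk _
    linarith [hy p i]

end Alternative

end ShapleyDuality

open ShapleyDuality

theorem stmt4_general
    (A : Fin m → Fin n → WithBot ℝ) (B : Fin m → Fin q → WithBot ℝ)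
    (P : Fin q → Fin n → ℝ)
    (hAcol : ∀ j, ∃ i, A i j ≠ ⊥)
    (hBrow : ∀ i, ∃ k, B i k ≠ ⊥)
    (hPnn : ∀ k l, 0 ≤ P k l)
    (hPsum : ∀ k, ∑ l, P k l = 1) :
    (∃ y : Fin m → WithBot ℝ, y ≠ (fun _ => ⊥) ∧ y ≤ dualShapleyT A B P y) ∨
    (∃ x : Fin n → ℝ, ∀ j, x j < shapley A B P x j) := by
  have hA : ∀ j, (colSupp A j).Nonempty := fun j => by
    simpa [colSupp, Finset.filter_nonempty_iff] using hAcol j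
  have hB : ∀ i, (rowSupp B i).Nonempty := fun i => by
    simpa [rowSupp, Finset.filter_nonempty_iff] using hBrow i
  rw [shapley_eq_shapleyFinset hA hB]
  by_cases hF : ∃ x : Fin n → ℝ, ∀ j, x j < shapleyFinset A B P x j
  · exact Or.inr hF
  obtain ⟨y, hy0, hy, i, c, hfreq⟩ := exists_normalized_orbit
    (dualShapleyReal_add_const hA hB hPsum)
    (exists_nonneg_iterate_dualShapleyReal hA hB hPnn hPsum hF)
  exact Or.inl ⟨limsupVec y, fun h => limsupBot_ne_bot hfreq (congrFun h i),
    limsupVec_le_dualShapleyT hA hB hPnn hPsum hy0 hy⟩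

/-- Either `𝒫(F*)` is feasible or `𝒫_ℝ(F)` is feasible. -/
theorem stmt4 (hm : 0 < m) (hn : 0 < n) (hq : 0 < q)
    (A : Fin m → Fin n → WithBot ℝ) (B : Fin m → Fin q → WithBot ℝ)
    (P : Fin q → Fin n → ℝ)
    (hAcol : ∀ j, ∃ i, A i j ≠ ⊥)
    (hArow : ∀ i, ∃ j, A i j ≠ ⊥)
    (hBrow : ∀ i, ∃ k, B i k ≠ ⊥)
    (hPnn : ∀ k l, 0 ≤ P k l)
    (hPsum : ∀ k, ∑ l, P k l = 1) :
    (∃ y : Fin m → WithBot ℝ, y ≠ (fun _ => ⊥) ∧ y ≤ dualShapleyT A B P y) ∨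
    (∃ x : Fin n → ℝ, ∀ j, x j < shapley A B P x j) :=
  stmt4_general A B P hAcol hBrow hPnn hPsum
end
end

section
/- Let F be a continuous, order-preserving, additively homogeneous self-map of Tⁿ that preserves ℝⁿ (i.e., F maps ℝⁿ into ℝⁿ). Then for every x ∈ ℝⁿ, the limit lim_{k→∞} ( min_i F^k(x)_i ) / k exists and equals the lower Collatz–Wielandt number c̲w̲(F) := sup{ μ ∈ ℝ : ∃ z ∈ ℝⁿ, F(z) ≥ μ + z }. -/
noncomputable section

/-- The order topology on `T = ℝ ∪ {-∞}`. -/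
instance : TopologicalSpace (WithBot ℝ) := Preorder.topology _

variable {n : ℕ}

/-- The canonical embedding of `ℝⁿ` into `Tⁿ`. -/
def toT (x : Fin n → ℝ) : Fin n → WithBot ℝ := fun i => (x i : WithBot ℝ)

/-- `F` is order-preserving. -/
def OrdPres (F : (Fin n → WithBot ℝ) → (Fin n → WithBot ℝ)) : Prop :=
  ∀ x y, x ≤ y → F x ≤ F y

/-- `F` is additively homogeneous. -/
def AddHomog (F : (Fin n → WithBot ℝ) → (Fin n → WithBot ℝ)) : Prop :=
  ∀ (c : ℝ) (x : Fin n → WithBot ℝ),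
    F (fun i => (c : WithBot ℝ) + x i) = fun i => (c : WithBot ℝ) + F x i

/-! On `ℝⁿ` the map is monotone and commutes with adding constants, so `c + x ≤ y` propagates to
`c + F^k x ≤ F^k y`. If `μ + z ≤ F z`, comparing `x` with a translate of `z` gives
`min F^k x ≥ kμ - O(1)`, so the lower limit of `min F^k x / k` is at least `c̲w̲(F)`. Conversely
`ν = (min F^k x - max x)/k` satisfies `kν + x ≤ F^k x`, and any such `ν` is at most `c̲w̲(F)`,
witnessed by `max_{j<k} (F^j x - jν)`; hence the upper limit is at most `c̲w̲(F)`. -/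

open Filter Topology

namespace Topical

variable {ι : Type*} {f : (ι → ℝ) → ι → ℝ}

def lowerCWSet (f : (ι → ℝ) → ι → ℝ) : Set ℝ := {μ | ∃ z, μ +ᵥ z ≤ f z}

theorem lowerCWSet_nonempty [Finite ι] : (lowerCWSet f).Nonempty :=
  ⟨⨅ i, f 0 i, 0, fun i => by
    simpa using ciInf_le (Set.finite_range (f 0)).bddBelow i⟩

section
variable (hmono : Monotone f) (hhom : ∀ c : ℝ, Function.Commute f (c +ᵥ ·))
include hmono hhom

theorem vadd_iterate_le_iterate {c : ℝ} {x y : ι → ℝ} (h : c +ᵥ x ≤ y) (k : ℕ) :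
    c +ᵥ f^[k] x ≤ f^[k] y :=
  ((hhom c).iterate_left k x).symm ▸ hmono.iterate k h

theorem vadd_map_le_map {c : ℝ} {x y : ι → ℝ} (h : c +ᵥ x ≤ y) : c +ᵥ f x ≤ f y :=
  vadd_iterate_le_iterate hmono hhom h 1

theorem mul_vadd_le_iterate {μ : ℝ} {z : ι → ℝ} (h : μ +ᵥ z ≤ f z) (k : ℕ) :
    k * μ +ᵥ z ≤ f^[k] z := by
  induction k with
  | zero => simp
  | succ k ih =>
    intro i
    have hprev := ih i
    have hstep := vadd_iterate_le_iterate hmono hhom h k i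
    rw [Function.iterate_succ_apply]
    simp only [Pi.vadd_apply, vadd_eq_add] at hprev hstep ⊢
    push_cast
    linarith

/-- Applying `f` to `max_{j<k} (f^j x - jν)` shifts the window of indices by one, and the term
`j = k` that enters dominates the term `j = 0` that leaves. -/
theorem mem_lowerCWSet_of_mul_vadd_le_iterate {k : ℕ} (hk : 0 < k) {ν : ℝ} {x : ι → ℝ}
    (h : k * ν +ᵥ x ≤ f^[k] x) : ν ∈ lowerCWSet f := by
  set w : ℕ → ι → ℝ := fun j => (-(j * ν)) +ᵥ f^[j] x
  have hne : (Finset.range k).Nonempty := Finset.nonempty_range_iff.mpr hk.ne'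
  set z := (Finset.range k).sup' hne w
  have hstep : ∀ j < k, ν +ᵥ w (j + 1) ≤ f z := by
    intro j hj
    have := vadd_map_le_map hmono hhom (Finset.le_sup' w (Finset.mem_range.mpr hj) : w j ≤ z)
    intro i
    have hi := this i
    simp only [w, Pi.vadd_apply, vadd_eq_add, Function.iterate_succ_apply'] at hi ⊢
    push_cast
    linarith
  have hends : w 0 ≤ w k := fun i => by
    have hi := h i
    simp only [w, Pi.vadd_apply, vadd_eq_add, CharP.cast_eq_zero, zero_mul, neg_zero, zero_add,
      Function.iterate_zero_apply] at hi ⊢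
    linarith
  have hz : z ≤ -ν +ᵥ f z := by
    refine Finset.sup'_le hne w fun j hj i => ?_
    have hj : j < k := Finset.mem_range.mp hj
    simp only [Pi.vadd_apply, vadd_eq_add]
    rcases j with _ | j
    · obtain ⟨j, rfl⟩ := Nat.exists_eq_succ_of_ne_zero hk.ne'
      have hlast := hstep j j.lt_succ_self i
      have := hends i
      simp only [Pi.vadd_apply, vadd_eq_add] at hlast
      linarith
    · have := hstep j (by omega) i
      simp only [Pi.vadd_apply, vadd_eq_add] at this
      linarith
  refine ⟨z, fun i => ?_⟩
  have := hz i
  simp only [Pi.vadd_apply, vadd_eq_add] at this ⊢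
  linarith

variable [Finite ι]

theorem div_mem_lowerCWSet {k : ℕ} (hk : 0 < k) (x : ι → ℝ) :
    ((⨅ i, f^[k] x i) - ⨆ i, x i) / k ∈ lowerCWSet f := by
  refine mem_lowerCWSet_of_mul_vadd_le_iterate hmono hhom hk (x := x) fun i => ?_
  have := ciInf_le (Set.finite_range (f^[k] x)).bddBelow i
  have := le_ciSup (Set.finite_range x).bddAbove i
  have hk' : (k : ℝ) ≠ 0 := by positivity
  simp only [Pi.vadd_apply, vadd_eq_add, mul_div_cancel₀ _ hk']
  linarith

variable [Nonempty ι]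

theorem bddAbove_lowerCWSet : BddAbove (lowerCWSet f) := by
  refine ⟨⨆ i, f 0 i, fun μ ⟨z, hz⟩ => ?_⟩
  obtain ⟨i₀, hi₀⟩ := Finite.exists_max z
  have hcmp := vadd_map_le_map hmono hhom (show -z i₀ +ᵥ z ≤ 0 from fun i => by
    simpa [neg_add_le_iff_le_add] using hi₀ i) i₀
  have := hz i₀
  simp only [Pi.vadd_apply, vadd_eq_add] at hcmp this
  linarith [le_ciSup (Set.finite_range (f 0)).bddAbove i₀]

theorem exists_forall_mul_add_le_iInf_iterate {μ : ℝ} (hμ : μ ∈ lowerCWSet f) (x : ι → ℝ) :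
    ∃ C, ∀ k : ℕ, k * μ + C ≤ ⨅ i, f^[k] x i := by
  obtain ⟨z, hz⟩ := hμ
  set c := ⨅ i, (x i - z i)
  have hcz : c +ᵥ z ≤ x := fun i => by
    have := ciInf_le (Set.finite_range fun i => x i - z i).bddBelow i
    simp only [Pi.vadd_apply, vadd_eq_add]
    linarith
  refine ⟨c + ⨅ i, z i, fun k => le_ciInf fun i => ?_⟩
  have hgrowth := mul_vadd_le_iterate hmono hhom hz k i
  have hshift := vadd_iterate_le_iterate hmono hhom hcz k i
  have := ciInf_le (Set.finite_range z).bddBelow i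
  simp only [Pi.vadd_apply, vadd_eq_add] at hgrowth hshift
  linarith

theorem tendsto_iInf_iterate_div_atTop (x : ι → ℝ) :
    Tendsto (fun k : ℕ => (⨅ i, f^[k] x i) / k) atTop (𝓝 (sSup (lowerCWSet f))) := by
  have hadd_div : ∀ (a C : ℝ), Tendsto (fun k : ℕ => a + C / k) atTop (𝓝 a) := fun a C => by
    simpa using tendsto_const_nhds.add (tendsto_const_div_atTop_nhds_zero_nat C)
  rw [tendsto_order]
  constructor
  · intro a ha
    obtain ⟨μ, hμ, haμ⟩ := exists_lt_of_lt_csSup lowerCWSet_nonempty ha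
    obtain ⟨C, hC⟩ := exists_forall_mul_add_le_iInf_iterate hmono hhom hμ x
    filter_upwards [(hadd_div μ C).eventually (lt_mem_nhds haμ), eventually_gt_atTop 0]
      with k hak hk
    refine hak.trans_le ?_
    rw [add_div' _ _ _ (by positivity), mul_comm]
    gcongr
    exact hC k
  · intro b hb
    filter_upwards [(hadd_div _ (⨆ i, x i)).eventually (gt_mem_nhds hb),
      eventually_gt_atTop 0] with k hbk hk
    refine lt_of_le_of_lt ?_ hbk
    have := le_csSup (bddAbove_lowerCWSet hmono hhom) (div_mem_lowerCWSet hmono hhom hk x)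
    rw [sub_div] at this
    linarith

end

end Topical

open Topical

theorem toT_injective : Function.Injective (toT : (Fin n → ℝ) → Fin n → WithBot ℝ) :=
  fun _ _ h => funext fun i => WithBot.coe_injective (congrFun h i)

theorem toT_le_toT {x y : Fin n → ℝ} : toT x ≤ toT y ↔ x ≤ y := by
  simp only [toT, Pi.le_def, WithBot.coe_le_coe]

theorem toT_vadd (c : ℝ) (x : Fin n → ℝ) :
    toT (c +ᵥ x) = fun i => (c : WithBot ℝ) + toT x i := by
  ext i
  simp only [toT, Pi.vadd_apply, vadd_eq_add, WithBot.coe_add]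

theorem sval_toT (x : Fin n → ℝ) (i : Fin n) : sval (toT x i) = x i :=
  WithBot.unbotD_coe 0 (x i)

theorem exists_real_restriction {F : (Fin n → WithBot ℝ) → Fin n → WithBot ℝ}
    (hmono : OrdPres F) (hhom : AddHomog F)
    (hpres : ∀ x : Fin n → ℝ, ∃ y : Fin n → ℝ, F (toT x) = toT y) :
    ∃ f : (Fin n → ℝ) → Fin n → ℝ, Monotone f ∧ (∀ c : ℝ, Function.Commute f (c +ᵥ ·)) ∧
      Function.Semiconj toT f F := by
  choose f hf using hpres
  refine ⟨f, fun x y hxy => ?_, fun c x => toT_injective ?_, fun x => (hf x).symm⟩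
  · rw [← toT_le_toT, ← hf, ← hf]
    exact hmono _ _ (toT_le_toT.mpr hxy)
  · rw [← hf, toT_vadd, hhom, hf, toT_vadd]

theorem stmt17_general (hn : 0 < n) (F : (Fin n → WithBot ℝ) → (Fin n → WithBot ℝ))
    (hmono : OrdPres F) (hhom : AddHomog F)
    (hpres : ∀ x : Fin n → ℝ, ∃ y : Fin n → ℝ, F (toT x) = toT y) :
    {μ : ℝ | ∃ z : Fin n → ℝ, ∀ i, ((μ + z i : ℝ) : WithBot ℝ) ≤ F (toT z) i}.Nonempty ∧
    BddAbove {μ : ℝ | ∃ z : Fin n → ℝ, ∀ i, ((μ + z i : ℝ) : WithBot ℝ) ≤ F (toT z) i} ∧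
    ∀ x : Fin n → ℝ,
      Filter.Tendsto
        (fun k : ℕ => (⨅ i, sval (F^[k] (toT x) i)) / (k : ℝ))
        Filter.atTop
        (nhds (sSup {μ : ℝ |
          ∃ z : Fin n → ℝ, ∀ i, ((μ + z i : ℝ) : WithBot ℝ) ≤ F (toT z) i})) := by
  have : Nonempty (Fin n) := ⟨⟨0, hn⟩⟩
  obtain ⟨f, hfmono, hfhom, hf⟩ := exists_real_restriction hmono hhom hpres
  have hset : {μ : ℝ | ∃ z : Fin n → ℝ, ∀ i, ((μ + z i : ℝ) : WithBot ℝ) ≤ F (toT z) i} =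
      lowerCWSet f := by
    ext μ
    simp only [lowerCWSet, Set.mem_ofPred_eq, ← hf _, toT, WithBot.coe_le_coe, Pi.le_def,
      Pi.vadd_apply, vadd_eq_add]
  rw [hset]
  refine ⟨lowerCWSet_nonempty, bddAbove_lowerCWSet hfmono hfhom, fun x => ?_⟩
  simpa only [← (hf.iterate_right _) x, sval_toT] using
    tendsto_iInf_iterate_div_atTop hfmono hfhom x

/-- For a continuous, order-preserving, additively homogeneous self-map of `Tⁿ` preserving
`ℝⁿ`, the set defining the lower Collatz–Wielandt number is nonempty and bounded above,
and for every `x ∈ ℝⁿ`, `lim_k (min_i F^k(x)_i)/k` exists and equals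
`c̲w̲(F) = sup { μ : ∃ z ∈ ℝⁿ, F(z) ≥ μ + z }`. -/
theorem stmt17 (hn : 0 < n) (F : (Fin n → WithBot ℝ) → (Fin n → WithBot ℝ))
    (hcont : Continuous F) (hmono : OrdPres F) (hhom : AddHomog F)
    (hpres : ∀ x : Fin n → ℝ, ∃ y : Fin n → ℝ, F (toT x) = toT y) :
    {μ : ℝ | ∃ z : Fin n → ℝ, ∀ i, ((μ + z i : ℝ) : WithBot ℝ) ≤ F (toT z) i}.Nonempty ∧
    BddAbove {μ : ℝ | ∃ z : Fin n → ℝ, ∀ i, ((μ + z i : ℝ) : WithBot ℝ) ≤ F (toT z) i} ∧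
    ∀ x : Fin n → ℝ,
      Filter.Tendsto
        (fun k : ℕ => (⨅ i, sval (F^[k] (toT x) i)) / (k : ℝ))
        Filter.atTop
        (nhds (sSup {μ : ℝ |
          ∃ z : Fin n → ℝ, ∀ i, ((μ + z i : ℝ) : WithBot ℝ) ≤ F (toT z) i})) :=
  stmt17_general hn F hmono hhom hpres
end
end
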